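/- arXiv:2006.05073 — 2 statements merged into one kernel-verified Lean document; each statement's English description precedes it below -/
import Mathlib

section
/- Energy conservation of the SAV–Gauss collocation scheme (Theorem 3.1, second part): under the abstract Gauss collocation SAV scheme, the discrete SAV energy is conserved: (1/2)·a(u_h(t_n), u_h(t_n)) − r_h(t_n)² = (1/2)·a(u_h(0), u_h(0)) − r_h(0)² for every n = 1, ..., N. (Note that a(v,v) ∈ ℝ since a is Hermitian; no assumption on G is required.) -/
/-!
On each `I_n` the SAV energy `E = ½ a(u_h, u_h) - r_h²` is a polynomial of degree `≤ 2k`.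
Testing (i) with `v = u_h'(t_nj)` kills the term `i‖u_h'‖²` in the real part, so
`Re a(u_h, u_h') = r_h Re⟨G(u_h), u_h'⟩ = 2 r_h r_h'` at the Gauss points by (ii), i.e. `E'`
vanishes there. `E'` has degree `< 2k`, and a polynomial of degree `< 2k` vanishing at the roots
of the Legendre polynomial `P_k` is `P_k` times a polynomial of degree `< k`, whose integral over
`[-1, 1]` vanishes by Rodrigues' formula and integration by parts. Hence `∫_{I_n} E' = 0`, that is
`E(t_n) = E(t_{n-1})`.
-/

open MeasureTheory

/-- The (unnormalized) Legendre polynomial of degree `k`: `d^k/dx^k [(x² - 1)^k]`. -/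
noncomputable def legendre (k : ℕ) : Polynomial ℝ :=
  Polynomial.derivative^[k] ((Polynomial.X ^ 2 - 1 : Polynomial ℝ) ^ k)

/-- `f : ℝ → X` is an `X`-valued polynomial of degree at most `m`. -/
def IsPolyDeg (X : Type*) [AddCommGroup X] [Module ℝ X] (m : ℕ) (f : ℝ → X) : Prop :=
  ∃ φ : Fin (m + 1) → X, ∀ t : ℝ, f t = ∑ i : Fin (m + 1), t ^ (i : ℕ) • φ i

/-- The `j`-th Gauss collocation point `t_{nj} = t_{n-1} + (1 + c_j) τ / 2` of the
interval `I_n = [(n-1)τ, nτ]`. -/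
noncomputable def collocPt (τ : ℝ) (n : ℕ) (cj : ℝ) : ℝ :=
  ((n : ℝ) - 1) * τ + (1 + cj) * τ / 2

open Polynomial Function Set

section GaussQuadrature

theorem degree_legendre (k : ℕ) : (legendre k).degree = k := by
  have hmonic : ((X ^ 2 - 1 : ℝ[X]) ^ k).Monic := by
    simpa using ((monic_X_pow_sub_C (1 : ℝ) two_ne_zero).pow k)
  have hdeg : ((X ^ 2 - 1 : ℝ[X]) ^ k).natDegree = 2 * k := by
    rw [natDegree_pow, ← C_1, natDegree_X_pow_sub_C, mul_comm]
  refine degree_eq_of_le_of_coeff_ne_zero ?_ ?_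
  · refine (degree_le_natDegree).trans ?_
    have := natDegree_iterate_derivative ((X ^ 2 - 1 : ℝ[X]) ^ k) k
    rw [hdeg] at this
    exact_mod_cast this.trans (by omega)
  · rw [legendre, coeff_iterate_derivative, ← two_mul, ← hdeg, hmonic.coeff_natDegree,
      nsmul_one, Nat.cast_ne_zero, Ne, Nat.descFactorial_eq_zero_iff_lt]
    omega

theorem eval_iterate_derivative_X_sq_sub_one_pow {i k : ℕ} (hik : i < k) {x : ℝ}
    (hx : x ^ 2 = 1) : (derivative^[i] ((X ^ 2 - 1 : ℝ[X]) ^ k)).eval x = 0 := by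
  have hdvd : (X - C x) ^ k ∣ (X ^ 2 - 1 : ℝ[X]) ^ k :=
    pow_dvd_pow_of_dvd (dvd_iff_isRoot.mpr (by simp [hx])) k
  have hmult : k ≤ rootMultiplicity x ((X ^ 2 - 1 : ℝ[X]) ^ k) :=
    (le_rootMultiplicity_iff (pow_ne_zero k (X_pow_sub_C_ne_zero two_pos 1))).mpr
      (by simpa using hdvd)
  exact isRoot_iterate_derivative_of_lt_rootMultiplicity (hik.trans_le hmult)

theorem integral_derivative_mul_eq_neg {f : ℝ[X]} {a b : ℝ} (ha : f.eval a = 0)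
    (hb : f.eval b = 0) (g : ℝ[X]) :
    ∫ x in a..b, f.derivative.eval x * g.eval x =
      -∫ x in a..b, f.eval x * g.derivative.eval x := by
  have := intervalIntegral.integral_mul_deriv_eq_deriv_mul (a := a) (b := b)
    (fun x _ => f.hasDerivAt x) (fun x _ => g.hasDerivAt x)
    (f.derivative.continuous.intervalIntegrable _ _)
    (g.derivative.continuous.intervalIntegrable _ _)
  rw [ha, hb, zero_mul, zero_mul, sub_zero, zero_sub] at this
  linarith

theorem integral_iterate_derivative_X_sq_sub_one_pow_mul {j k : ℕ} (hjk : j ≤ k) (s : ℝ[X]) :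
    ∫ x in (-1 : ℝ)..1, (derivative^[j] ((X ^ 2 - 1 : ℝ[X]) ^ k)).eval x * s.eval x =
      (-1) ^ j *
        ∫ x in (-1 : ℝ)..1, ((X ^ 2 - 1 : ℝ[X]) ^ k).eval x * (derivative^[j] s).eval x := by
  induction j generalizing s with
  | zero => simp
  | succ j ih =>
    rw [iterate_succ_apply', integral_derivative_mul_eq_neg
      (eval_iterate_derivative_X_sq_sub_one_pow (by omega) (by norm_num))
      (eval_iterate_derivative_X_sq_sub_one_pow (by omega) (by norm_num)),
      ih (by omega), iterate_succ_apply, pow_succ]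
    ring

theorem integral_legendre_mul_eq_zero {k : ℕ} {s : ℝ[X]} (hs : s.degree < k) :
    ∫ x in (-1 : ℝ)..1, (legendre k).eval x * s.eval x = 0 := by
  rw [legendre, integral_iterate_derivative_X_sq_sub_one_pow_mul le_rfl,
    iterate_derivative_eq_zero_of_degree_lt hs]
  simp

theorem dvd_of_eval_eq_zero_of_degree_eq {K : Type*} [Field K] {k : ℕ} {c : Fin k → K}
    (hc : Injective c) {P g : K[X]} (hP : P.degree = k) (hPc : ∀ j, P.eval (c j) = 0)
    (hgc : ∀ j, g.eval (c j) = 0) : P ∣ g := by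
  have hP0 : P ≠ 0 := fun h => by simp [h] at hP
  rw [← EuclideanDomain.mod_eq_zero]
  by_contra hr
  refine hr (eq_zero_of_natDegree_lt_card_of_eval_eq_zero _ hc (fun j => ?_) ?_)
  · rw [EuclideanDomain.mod_eq_sub_mul_div, eval_sub, eval_mul, hgc j, hPc j]
    ring
  · rw [Fintype.card_fin, natDegree_lt_iff_degree_lt hr, ← hP]
    exact degree_mod_lt g hP0

variable {k : ℕ} {c : Fin k → ℝ}

theorem integral_eq_zero_of_eval_legendre_roots (hc : Injective c)
    (hroot : ∀ j, (legendre k).eval (c j) = 0) {g : ℝ[X]} (hg : g.degree < ↑(2 * k))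
    (hgc : ∀ j, g.eval (c j) = 0) : ∫ x in (-1 : ℝ)..1, g.eval x = 0 := by
  obtain ⟨q, rfl⟩ := dvd_of_eval_eq_zero_of_degree_eq hc (degree_legendre k) hroot hgc
  have hq : q.degree < k := by
    rw [degree_mul, degree_legendre, two_mul, Nat.cast_add] at hg
    exact (WithBot.add_lt_add_iff_left (WithBot.coe_ne_bot)).mp hg
  simpa using integral_legendre_mul_eq_zero hq

theorem eval_one_eq_eval_neg_one_of_derivative_eval_eq_zero (hc : Injective c)
    (hroot : ∀ j, (legendre k).eval (c j) = 0) {e : ℝ[X]} (he : e.natDegree ≤ 2 * k)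
    (he' : ∀ j, e.derivative.eval (c j) = 0) : e.eval 1 = e.eval (-1) := by
  have hdeg : e.derivative.degree < ↑(2 * k) := by
    rcases eq_or_ne e 0 with rfl | he0
    · rw [derivative_zero, degree_zero]
      exact WithBot.bot_lt_coe _
    · exact (degree_derivative_lt he0).trans_le (degree_le_of_natDegree_le he)
  have := integral_eq_zero_of_eval_legendre_roots hc hroot hdeg he'
  rw [intervalIntegral.integral_eq_sub_of_hasDerivAt (fun x _ => e.hasDerivAt x)
    (e.derivative.continuous.intervalIntegrable _ _)] at this
  linarith

theorem collocPt_mem_Ioo {τ : ℝ} (hτ : 0 < τ) (n : ℕ) {x : ℝ} (hx : x ∈ Ioo (-1 : ℝ) 1) :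
    collocPt τ n x ∈ Ioo (((n : ℝ) - 1) * τ) (n * τ) := by
  obtain ⟨h₁, h₂⟩ := hx
  constructor <;> unfold collocPt <;> nlinarith

theorem eval_eq_of_derivative_eval_collocPt_eq_zero (hc : Injective c)
    (hroot : ∀ j, (legendre k).eval (c j) = 0) (τ : ℝ) (n : ℕ) {e : ℝ[X]}
    (he : e.natDegree ≤ 2 * k) (he' : ∀ j, e.derivative.eval (collocPt τ n (c j)) = 0) :
    e.eval (n * τ) = e.eval (((n : ℝ) - 1) * τ) := by
  set ℓ : ℝ[X] := C (τ / 2) * X + C (((n : ℝ) - 1) * τ + τ / 2)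
  have hℓ : ∀ x, ℓ.eval x = collocPt τ n x := fun x => by
    simp only [ℓ, eval_add, eval_mul, eval_C, eval_X, collocPt]
    ring
  have hdeg : (e.comp ℓ).natDegree ≤ 2 * k :=
    natDegree_comp_le.trans ((Nat.mul_le_mul he natDegree_linear_le).trans_eq (mul_one _))
  have := eval_one_eq_eval_neg_one_of_derivative_eval_eq_zero hc hroot hdeg fun j => by
    rw [derivative_comp, eval_mul, eval_comp, hℓ, he' j, mul_zero]
  have h₁ : collocPt τ n 1 = n * τ := by unfold collocPt; ring
  have h₂ : collocPt τ n (-1) = ((n : ℝ) - 1) * τ := by unfold collocPt; ring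
  rwa [eval_comp, eval_comp, hℓ, hℓ, h₁, h₂] at this

theorem eq_of_deriv_collocPt_eq_zero (hc : Injective c)
    (hroot : ∀ j, (legendre k).eval (c j) = 0) (hmem : ∀ j, c j ∈ Ioo (-1 : ℝ) 1) {τ : ℝ}
    (hτ : 0 < τ) (n : ℕ) {f : ℝ → ℝ} {e : ℝ[X]} (he : e.natDegree ≤ 2 * k)
    (hfe : EqOn f (fun t => e.eval t) (Icc (((n : ℝ) - 1) * τ) (n * τ)))
    (hf' : ∀ j, deriv f (collocPt τ n (c j)) = 0) : f (n * τ) = f (((n : ℝ) - 1) * τ) := by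
  have hle : ((n : ℝ) - 1) * τ ≤ n * τ := by nlinarith
  rw [hfe ⟨hle, le_rfl⟩, hfe ⟨le_rfl, hle⟩]
  refine eval_eq_of_derivative_eval_collocPt_eq_zero hc hroot τ n he fun j => ?_
  obtain ⟨h₁, h₂⟩ := collocPt_mem_Ioo hτ n (hmem j)
  rw [← e.deriv, ← (Filter.eventuallyEq_of_mem (Icc_mem_nhds h₁ h₂) hfe).deriv_eq, hf' j]

end GaussQuadrature

section PolynomialCurves

variable {E F : Type*} [NormedAddCommGroup E] [NormedSpace ℝ E] [NormedAddCommGroup F]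
  [NormedSpace ℝ F] {m n : ℕ}

theorem IsPolyDeg.differentiable {f : ℝ → E} (hf : IsPolyDeg E m f) : Differentiable ℝ f := by
  obtain ⟨φ, hφ⟩ := hf
  rw [show f = fun t => ∑ i : Fin (m + 1), t ^ (i : ℕ) • φ i from funext hφ]
  fun_prop

theorem IsPolyDeg.differentiableAt_of_eqOn {p f : ℝ → E} (hp : IsPolyDeg E m p) {a b t : ℝ}
    (hf : EqOn f p (Icc a b)) (ht : t ∈ Ioo a b) : DifferentiableAt ℝ f t :=
  (hp.differentiable t).congr_of_eventuallyEq
    (Filter.eventuallyEq_of_mem (Icc_mem_nhds ht.1 ht.2) hf)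

theorem IsPolyDeg.exists_polynomial_eq_apply_apply (B : E →L[ℝ] F →L[ℝ] ℝ) {f : ℝ → E}
    {g : ℝ → F} (hf : IsPolyDeg E m f) (hg : IsPolyDeg F n g) :
    ∃ e : ℝ[X], e.natDegree ≤ m + n ∧ ∀ t, e.eval t = B (f t) (g t) := by
  obtain ⟨φ, hφ⟩ := hf
  obtain ⟨ψ, hψ⟩ := hg
  refine ⟨∑ i, ∑ j, C (B (φ i) (ψ j)) * X ^ ((i : ℕ) + j), ?_, fun t => ?_⟩
  · refine natDegree_sum_le_of_forall_le _ _ fun i _ =>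
      natDegree_sum_le_of_forall_le _ _ fun j _ => (natDegree_C_mul_X_pow_le _ _).trans ?_
    omega
  · simp only [hφ, hψ, map_sum, map_smul, FunLike.coe_sum, Finset.sum_apply,
      FunLike.coe_smul, Pi.smul_apply, smul_eq_mul, eval_finsetSum, eval_mul, eval_C,
      eval_pow, eval_X, pow_add, Finset.mul_sum]
    rw [Finset.sum_comm]
    exact Finset.sum_congr rfl fun i _ => Finset.sum_congr rfl fun j _ => by ring

end PolynomialCurves

theorem exists_continuousLinearMap₂_apply_eq_re {V : Type*} [NormedAddCommGroup V]
    [NormedSpace ℂ V] [FiniteDimensional ℂ V] (a : V → V → ℂ)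
    (ha_add : ∀ v₁ v₂ w : V, a (v₁ + v₂) w = a v₁ w + a v₂ w)
    (ha_smul : ∀ (z : ℂ) (v w : V), a (z • v) w = z * a v w)
    (ha_herm : ∀ v w : V, a v w = starRingEnd ℂ (a w v)) :
    ∃ B : V →L[ℝ] V →L[ℝ] ℝ, ∀ v w, B v w = (a v w).re := by
  have hsymm : ∀ v w, (a v w).re = (a w v).re := fun v w => by rw [ha_herm, Complex.conj_re]
  have hadd : ∀ v₁ v₂ w, (a (v₁ + v₂) w).re = (a v₁ w).re + (a v₂ w).re := fun v₁ v₂ w => by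
    rw [ha_add, Complex.add_re]
  have hsmul : ∀ (x : ℝ) v w, (a (x • v) w).re = x * (a v w).re := fun x v w => by
    rw [← Complex.coe_smul, ha_smul, Complex.re_ofReal_mul]
  let L : V →ₗ[ℝ] V →ₗ[ℝ] ℝ := LinearMap.mk₂ ℝ (fun v w => (a v w).re) hadd hsmul
    (fun v w₁ w₂ => by simp only [hsymm v, hadd])
    (fun x v w => by simp only [hsymm v, hsmul, smul_eq_mul])
  exact ⟨LinearMap.toContinuousLinearMap (LinearMap.toContinuousLinearMap.toLinearMap ∘ₗ L),
    fun v w => rfl⟩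

theorem re_eq_of_I_mul_inner_self_add_eq {V : Type*} [NormedAddCommGroup V]
    [InnerProductSpace ℂ V] {v : V} {z w : ℂ} (h : Complex.I * inner ℂ v v + z = w) :
    z.re = w.re := by
  have him : (inner ℂ v v).im = 0 := inner_self_im (𝕜 := ℂ) v
  rw [← h, Complex.add_re, Complex.I_mul_re, him, neg_zero, zero_add]

theorem energy_eq_of_collocation {V : Type*} [NormedAddCommGroup V] [NormedSpace ℝ V]
    (B : V →L[ℝ] V →L[ℝ] ℝ) (hB : ∀ v w, B v w = B w v) {k : ℕ} {c : Fin k → ℝ}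
    (hc : Injective c) (hroot : ∀ j, (legendre k).eval (c j) = 0)
    (hmem : ∀ j, c j ∈ Ioo (-1 : ℝ) 1) {τ : ℝ} (hτ : 0 < τ) (n : ℕ) {u : ℝ → V} {r : ℝ → ℝ}
    (hu : ∃ p, IsPolyDeg V k p ∧ EqOn u p (Icc (((n : ℝ) - 1) * τ) (n * τ)))
    (hr : ∃ q, IsPolyDeg ℝ k q ∧ EqOn r q (Icc (((n : ℝ) - 1) * τ) (n * τ)))
    (hcolloc : ∀ j, B (u (collocPt τ n (c j))) (deriv u (collocPt τ n (c j)))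
      = 2 * r (collocPt τ n (c j)) * deriv r (collocPt τ n (c j))) :
    1 / 2 * B (u (n * τ)) (u (n * τ)) - r (n * τ) ^ 2
      = 1 / 2 * B (u (((n : ℝ) - 1) * τ)) (u (((n : ℝ) - 1) * τ))
        - r (((n : ℝ) - 1) * τ) ^ 2 := by
  obtain ⟨p, hp, hup⟩ := hu
  obtain ⟨q, hq, hrq⟩ := hr
  obtain ⟨e₁, he₁, hpe₁⟩ := hp.exists_polynomial_eq_apply_apply B hp
  obtain ⟨e₂, he₂, hqe₂⟩ :=
    hq.exists_polynomial_eq_apply_apply (ContinuousLinearMap.mul ℝ ℝ) hq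
  refine eq_of_deriv_collocPt_eq_zero (f := fun t => 1 / 2 * B (u t) (u t) - r t ^ 2)
    (e := C (1 / 2) * e₁ - e₂) hc hroot hmem hτ n ?_ (fun t ht => ?_) (fun j => ?_)
  · refine (natDegree_sub_le _ _).trans (max_le ((natDegree_C_mul_le _ _).trans ?_) ?_)
      <;> omega
  · simp [hup ht, hrq ht, hpe₁, hqe₂, sq]
  · have ht := collocPt_mem_Ioo hτ n (hmem j)
    have hu' := (hp.differentiableAt_of_eqOn hup ht).hasDerivAt
    have hr' := (hq.differentiableAt_of_eqOn hrq ht).hasDerivAt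
    rw [(((B.hasDerivAt_of_bilinear (fun _ => hu') (fun _ => hu')).const_mul (1 / 2)).fun_sub
      (hr'.fun_pow 2)).deriv, hB (deriv u _), hcolloc j]
    ring

theorem apply_nat_mul_eq_apply_zero {α : Type*} {F : ℝ → α} {τ : ℝ} {N : ℕ}
    (h : ∀ n ∈ Finset.Icc 1 N, F (n * τ) = F (((n : ℝ) - 1) * τ)) :
    ∀ n ∈ Finset.Icc 1 N, F (n * τ) = F 0 := by
  suffices ∀ n ≤ N, F (n * τ) = F 0 from fun n hn => this n (Finset.mem_Icc.mp hn).2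
  intro n
  induction n with
  | zero => simp
  | succ n ih =>
    intro hn
    rw [h (n + 1) (Finset.mem_Icc.mpr ⟨by omega, hn⟩), ← ih (by omega)]
    push_cast
    ring_nf

theorem energy_conservation_general
    (k N : ℕ) (T : ℝ) (hT : 0 < T)
    -- the Gauss points of [-1,1]: the k roots of the Legendre polynomial of degree k
    (c : Fin k → ℝ) (hmono : StrictMono c)
    (hroot : ∀ j, (legendre k).eval (c j) = 0)
    (hmem : ∀ j, c j ∈ Set.Ioo (-1 : ℝ) 1)
    -- V : a finite-dimensional complex inner product space
    (V : Type*) [NormedAddCommGroup V] [InnerProductSpace ℂ V] [FiniteDimensional ℂ V]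
    -- a : a Hermitian sesquilinear form (paper's convention: linear in the first argument)
    (a : V → V → ℂ)
    (ha_add : ∀ v₁ v₂ w : V, a (v₁ + v₂) w = a v₁ w + a v₂ w)
    (ha_smul : ∀ (z : ℂ) (v w : V), a (z • v) w = z * a v w)
    (ha_herm : ∀ v w : V, a v w = starRingEnd ℂ (a w v))
    -- G : an arbitrary map
    -- (paper's ⟨x, y⟩, linear in x, is Mathlib's `inner y x`)
    (G : V → V)
    -- numerical solution: continuous, piecewise polynomial of degree ≤ k in time
    (uh : ℝ → V) (rh : ℝ → ℝ)
    (hupoly : ∀ n ∈ Finset.Icc 1 N, ∃ p : ℝ → V, IsPolyDeg V k p ∧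
      ∀ t ∈ Set.Icc (((n : ℝ) - 1) * (T / N)) ((n : ℝ) * (T / N)), uh t = p t)
    (hrpoly : ∀ n ∈ Finset.Icc 1 N, ∃ q : ℝ → ℝ, IsPolyDeg ℝ k q ∧
      ∀ t ∈ Set.Icc (((n : ℝ) - 1) * (T / N)) ((n : ℝ) * (T / N)), rh t = q t)
    -- Gauss collocation equation (i):  i⟨u_h'(t_nj), v⟩ + a(u_h(t_nj), v)
    --   - r_h(t_nj) ⟨G(u_h(t_nj)), v⟩ = 0  for all v ∈ V
    (hu_eq : ∀ n ∈ Finset.Icc 1 N, ∀ j : Fin k, ∀ v : V,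
      Complex.I * (inner ℂ v (deriv uh (collocPt (T / N) n (c j))) : ℂ)
        + a (uh (collocPt (T / N) n (c j))) v
        - (rh (collocPt (T / N) n (c j)) : ℂ)
            * (inner ℂ v (G (uh (collocPt (T / N) n (c j)))) : ℂ) = 0)
    -- Gauss collocation equation (ii): r_h'(t_nj) = (1/2) Re ⟨G(u_h(t_nj)), u_h'(t_nj)⟩
    (hr_eq : ∀ n ∈ Finset.Icc 1 N, ∀ j : Fin k,
      deriv rh (collocPt (T / N) n (c j))
        = (1 / 2) * ((inner ℂ (deriv uh (collocPt (T / N) n (c j)))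
            (G (uh (collocPt (T / N) n (c j)))) : ℂ)).re) :
    -- conclusion: discrete SAV energy conservation for n = 1, ..., N
    ∀ n ∈ Finset.Icc 1 N,
      (1 / 2) * (a (uh ((n : ℝ) * (T / N))) (uh ((n : ℝ) * (T / N)))).re
          - (rh ((n : ℝ) * (T / N))) ^ 2
        = (1 / 2) * (a (uh 0) (uh 0)).re - (rh 0) ^ 2 := by
  obtain ⟨B, hB⟩ := exists_continuousLinearMap₂_apply_eq_re a ha_add ha_smul ha_herm
  have hB_symm : ∀ v w, B v w = B w v := fun v w => by rw [hB, hB, ha_herm, Complex.conj_re]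
  refine apply_nat_mul_eq_apply_zero (F := fun t => 1 / 2 * (a (uh t) (uh t)).re - rh t ^ 2)
    fun n hn => ?_
  obtain ⟨hn₁, hnN⟩ := Finset.mem_Icc.mp hn
  have hτ : 0 < T / N := div_pos hT (Nat.cast_pos.mpr (by omega))
  simp only [← hB]
  refine energy_eq_of_collocation B hB_symm hmono.injective hroot hmem hτ n (hupoly n hn)
    (hrpoly n hn) fun j => ?_
  have h := re_eq_of_I_mul_inner_self_add_eq (sub_eq_zero.mp (hu_eq n hn j (deriv uh _)))
  rw [hB, h, Complex.re_ofReal_mul, hr_eq n hn j]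
  ring

theorem energy_conservation
    (k N : ℕ) (hk : 1 ≤ k) (hN : 1 ≤ N) (T : ℝ) (hT : 0 < T)
    -- the Gauss points of [-1,1]: the k roots of the Legendre polynomial of degree k
    (c : Fin k → ℝ) (hmono : StrictMono c)
    (hroot : ∀ j, (legendre k).eval (c j) = 0)
    (hmem : ∀ j, c j ∈ Set.Ioo (-1 : ℝ) 1)
    -- V : a finite-dimensional complex inner product space
    (V : Type*) [NormedAddCommGroup V] [InnerProductSpace ℂ V] [FiniteDimensional ℂ V]
    -- a : a Hermitian sesquilinear form (paper's convention: linear in the first argument)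
    (a : V → V → ℂ)
    (ha_add : ∀ v₁ v₂ w : V, a (v₁ + v₂) w = a v₁ w + a v₂ w)
    (ha_smul : ∀ (z : ℂ) (v w : V), a (z • v) w = z * a v w)
    (ha_herm : ∀ v w : V, a v w = starRingEnd ℂ (a w v))
    -- G : an arbitrary map
    -- (paper's ⟨x, y⟩, linear in x, is Mathlib's `inner y x`)
    (G : V → V)
    -- numerical solution: continuous, piecewise polynomial of degree ≤ k in time
    (uh : ℝ → V) (rh : ℝ → ℝ)
    (hupoly : ∀ n ∈ Finset.Icc 1 N, ∃ p : ℝ → V, IsPolyDeg V k p ∧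
      ∀ t ∈ Set.Icc (((n : ℝ) - 1) * (T / N)) ((n : ℝ) * (T / N)), uh t = p t)
    (hrpoly : ∀ n ∈ Finset.Icc 1 N, ∃ q : ℝ → ℝ, IsPolyDeg ℝ k q ∧
      ∀ t ∈ Set.Icc (((n : ℝ) - 1) * (T / N)) ((n : ℝ) * (T / N)), rh t = q t)
    -- Gauss collocation equation (i):  i⟨u_h'(t_nj), v⟩ + a(u_h(t_nj), v)
    --   - r_h(t_nj) ⟨G(u_h(t_nj)), v⟩ = 0  for all v ∈ V
    (hu_eq : ∀ n ∈ Finset.Icc 1 N, ∀ j : Fin k, ∀ v : V,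
      Complex.I * (inner ℂ v (deriv uh (collocPt (T / N) n (c j))) : ℂ)
        + a (uh (collocPt (T / N) n (c j))) v
        - (rh (collocPt (T / N) n (c j)) : ℂ)
            * (inner ℂ v (G (uh (collocPt (T / N) n (c j)))) : ℂ) = 0)
    -- Gauss collocation equation (ii): r_h'(t_nj) = (1/2) Re ⟨G(u_h(t_nj)), u_h'(t_nj)⟩
    (hr_eq : ∀ n ∈ Finset.Icc 1 N, ∀ j : Fin k,
      deriv rh (collocPt (T / N) n (c j))
        = (1 / 2) * ((inner ℂ (deriv uh (collocPt (T / N) n (c j)))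
            (G (uh (collocPt (T / N) n (c j)))) : ℂ)).re) :
    -- conclusion: discrete SAV energy conservation for n = 1, ..., N
    ∀ n ∈ Finset.Icc 1 N,
      (1 / 2) * (a (uh ((n : ℝ) * (T / N))) (uh ((n : ℝ) * (T / N)))).re
          - (rh ((n : ℝ) * (T / N))) ^ 2
        = (1 / 2) * (a (uh 0) (uh 0)).re - (rh 0) ^ 2 :=
  energy_conservation_general k N T hT c hmono hroot hmem V a ha_add ha_smul ha_herm G uh rh hupoly
    hrpoly hu_eq hr_eq
end

section
/- Projection energy identity (established in the proofs of Theorem 3.2 and Lemma 4.3, combining (3.18)/(4.9)–(4.11)): let X be a complex Hilbert space, k ≥ 1 an integer, and I = [a, b] with τ = b − a > 0. Then for every X-valued polynomial v of degree ≤ k, (1/2)·∫_I ‖(Pv)(t)‖² dt + (τ/2)·‖(Pv)(a)‖² = τ·Re⟨v(a), (Pv)(a)⟩ + Re ∫_I ⟨v'(t), (b − t)·(Pv)(t)⟩ dt. -/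
/-!
Projection energy identity (combining (3.18)/(4.9)–(4.11) in the proofs of Theorem 3.2
and Lemma 4.3): for every `X`-valued polynomial `v` of degree ≤ k,
`(1/2) ∫_I ‖(Pv)(t)‖² dt + (τ/2) ‖(Pv)(a)‖²
   = τ Re⟨v(a), (Pv)(a)⟩ + Re ∫_I ⟨v'(t), (b − t)(Pv)(t)⟩ dt`.
-/

open MeasureTheory

/-- `p` is the L²(a,b)-orthogonal projection of `u` onto `X`-valued polynomials of
degree ≤ k-1. -/
def IsL2ProjOn (X : Type*) [NormedAddCommGroup X] [InnerProductSpace ℂ X]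
    (a b : ℝ) (k : ℕ) (u p : ℝ → X) : Prop :=
  IsPolyDeg X (k - 1) p ∧
    ∀ χ : ℝ → X, IsPolyDeg X (k - 1) χ →
      (∫ t in a..b, (inner ℂ (u t - p t) (χ t) : ℂ)) = 0

/-!
Write `q = Pv` and `χ(t) = q(t) - (b - t) q'(t)`, again a polynomial of degree ≤ k - 1.
Integrating `d/dt [(b - t) ⟨f, q⟩]` over `I` gives
`∫_I ⟨f, χ⟩ = τ ⟨f(a), q(a)⟩ + ∫_I ⟨f', (b - t) q⟩` for every `C¹` function `f`.
For `f = v` the real part of the right side is the right side of the identity, and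
orthogonality of `v - q` to `χ` turns the left side into `∫_I ⟨q, χ⟩`. For `f = q` the real
part of the last term is `(∫_I ‖q‖² - τ ‖q(a)‖²) / 2`, which evaluates `Re ∫_I ⟨q, χ⟩`.
-/

open Finset
open scoped InnerProductSpace ComplexConjugate

section PolyDegLE

variable (X : Type*) [AddCommGroup X] [Module ℝ X]

def polyDegLE (m : ℕ) : Submodule ℝ (ℝ → X) where
  carrier := {f | IsPolyDeg X m f}
  add_mem' := by
    rintro f g ⟨φ, hφ⟩ ⟨ψ, hψ⟩
    exact ⟨φ + ψ, fun t => by simp [hφ t, hψ t, sum_add_distrib]⟩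
  zero_mem' := ⟨0, by simp⟩
  smul_mem' := by
    rintro c f ⟨φ, hφ⟩
    exact ⟨c • φ, fun t => by simp [hφ t, smul_sum, smul_comm c]⟩

end PolyDegLE

section

variable {X : Type*} [NormedAddCommGroup X] [NormedSpace ℝ X]

theorem hasDerivAt_sum_pow_smul (φ : ℕ → X) (n : ℕ) (t : ℝ) :
    HasDerivAt (fun s => ∑ i ∈ range n, s ^ i • φ i)
      (∑ i ∈ range n, ((i : ℝ) * t ^ (i - 1)) • φ i) t :=
  HasDerivAt.fun_sum fun i _ => (hasDerivAt_pow i t).smul_const (φ i)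

end

namespace IsPolyDeg

section Algebraic

variable {X : Type*} [AddCommGroup X] [Module ℝ X] {m n : ℕ} {f : ℝ → X}

theorem iff_exists_range :
    IsPolyDeg X m f ↔ ∃ φ : ℕ → X, ∀ t, f t = ∑ i ∈ range (m + 1), t ^ i • φ i := by
  constructor
  · rintro ⟨φ, hφ⟩
    refine ⟨fun i => if h : i < m + 1 then φ ⟨i, h⟩ else 0, fun t => ?_⟩
    rw [hφ t, ← Fin.sum_univ_eq_sum_range]
    simp [Fin.is_le]
  · rintro ⟨φ, hφ⟩
    exact ⟨fun i => φ i, fun t => by rw [hφ t, ← Fin.sum_univ_eq_sum_range]⟩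

theorem mono (hf : IsPolyDeg X m f) (hmn : m ≤ n) : IsPolyDeg X n f := by
  obtain ⟨φ, hφ⟩ := iff_exists_range.1 hf
  refine iff_exists_range.2 ⟨fun i => if i < m + 1 then φ i else 0, fun t => ?_⟩
  rw [hφ t, ← sum_subset (range_subset_range.2 (by omega : m + 1 ≤ n + 1))]
  · exact sum_congr rfl fun i hi => by simp [mem_range.1 hi]
  · intro i _ hi
    simp [mem_range.not.1 hi]

end Algebraic

section Calculus

variable {X : Type*} [NormedAddCommGroup X] [NormedSpace ℝ X] {m : ℕ} {f : ℝ → X}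

theorem contDiff (hf : IsPolyDeg X m f) {n : WithTop ℕ∞} : ContDiff ℝ n f := by
  obtain ⟨φ, hφ⟩ := hf
  rw [funext hφ]
  fun_prop

theorem continuous (hf : IsPolyDeg X m f) : Continuous f :=
  (hf.contDiff (n := 0)).continuous

theorem deriv (hf : IsPolyDeg X (m + 1) f) : IsPolyDeg X m (deriv f) := by
  obtain ⟨φ, hφ⟩ := iff_exists_range.1 hf
  refine iff_exists_range.2 ⟨fun i => ((i : ℝ) + 1) • φ (i + 1), fun t => ?_⟩
  rw [funext hφ, (hasDerivAt_sum_pow_smul φ _ t).deriv, sum_range_succ']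
  simp [smul_smul, mul_comm]

theorem smul_deriv (hf : IsPolyDeg X m f) : IsPolyDeg X m (fun t => t • _root_.deriv f t) := by
  obtain ⟨φ, hφ⟩ := iff_exists_range.1 hf
  refine iff_exists_range.2 ⟨fun i => (i : ℝ) • φ i, fun t => ?_⟩
  rw [funext hφ, (hasDerivAt_sum_pow_smul φ _ t).deriv, smul_sum]
  refine sum_congr rfl fun i _ => ?_
  rw [smul_smul, smul_smul]
  congr 1
  rcases i with _ | i
  · simp
  · rw [Nat.add_sub_cancel, pow_succ]
    push_cast
    ring

theorem sub_smul_deriv (hf : IsPolyDeg X m f) (c : ℝ) :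
    IsPolyDeg X m (fun t => f t - (c - t) • _root_.deriv f t) := by
  have hf' : IsPolyDeg X m (_root_.deriv f) := (hf.mono m.le_succ).deriv
  have h : (fun t => f t - (c - t) • _root_.deriv f t)
      = f - c • _root_.deriv f + fun t => t • _root_.deriv f t := by
    funext t
    simp only [Pi.add_apply, Pi.sub_apply, Pi.smul_apply, sub_smul]
    abel
  rw [h]
  exact add_mem (sub_mem (show f ∈ polyDegLE X m from hf) (Submodule.smul_mem _ c hf'))
    hf.smul_deriv

end Calculus

end IsPolyDeg

section WeightedIntegrationByParts

variable {X : Type*} [NormedAddCommGroup X] [InnerProductSpace ℂ X] {f g : ℝ → X} {a b : ℝ}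

theorem inner_real_smul_left (r : ℝ) (x y : X) : ⟪r • x, y⟫_ℂ = r * ⟪x, y⟫_ℂ := by
  rw [RCLike.real_smul_eq_coe_smul (K := ℂ), inner_smul_real_left, Complex.real_smul]

theorem integral_inner_sub_smul_deriv (hf : ContDiff ℝ 1 f) (hg : ContDiff ℝ 1 g) :
    ∫ t in a..b, ⟪g t - (b - t) • deriv g t, f t⟫_ℂ
      = (b - a : ℝ) * ⟪g a, f a⟫_ℂ + ∫ t in a..b, ⟪(b - t) • g t, deriv f t⟫_ℂ := by
  have hderiv : ∀ t, HasDerivAt (fun t => ⟪(b - t) • g t, f t⟫_ℂ)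
      (⟪(b - t) • g t, deriv f t⟫_ℂ - ⟪g t - (b - t) • deriv g t, f t⟫_ℂ) t := by
    intro t
    have hw : HasDerivAt (fun t => (b - t) • g t) ((b - t) • deriv g t + (-1 : ℝ) • g t) t :=
      ((hasDerivAt_id' t).const_sub b).smul (hg.differentiable one_ne_zero t).hasDerivAt
    refine (hw.inner ℂ (hf.differentiable one_ne_zero t).hasDerivAt).congr_deriv ?_
    simp only [inner_sub_left, inner_add_left, inner_real_smul_left]
    push_cast
    ring
  have hf' := hf.continuous_deriv le_rfl
  have hg' := hg.continuous_deriv le_rfl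
  have hfg : Continuous fun t => ⟪(b - t) • g t, deriv f t⟫_ℂ := by fun_prop
  have hgf : Continuous fun t => ⟪g t - (b - t) • deriv g t, f t⟫_ℂ := by fun_prop
  have hftc := intervalIntegral.integral_eq_sub_of_hasDerivAt (fun t _ => hderiv t)
    ((hfg.sub hgf).intervalIntegrable a b)
  rw [intervalIntegral.integral_sub (hfg.intervalIntegrable a b) (hgf.intervalIntegrable a b)]
    at hftc
  rw [sub_self, zero_smul, inner_zero_left, inner_real_smul_left] at hftc
  linear_combination -hftc

theorem re_integral_inner_sub_smul_deriv_self (hg : ContDiff ℝ 1 g) :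
    (∫ t in a..b, ⟪g t - (b - t) • deriv g t, g t⟫_ℂ).re
      = 1 / 2 * (∫ t in a..b, ‖g t‖ ^ 2) + (b - a) / 2 * ‖g a‖ ^ 2 := by
  have hg' := hg.continuous_deriv le_rfl
  have hg0 := hg.continuous
  have hgg : Continuous fun t => ⟪g t, g t⟫_ℂ := by fun_prop
  have hg'g : Continuous fun t => ⟪(b - t) • deriv g t, g t⟫_ℂ := by fun_prop
  have hibp := integral_inner_sub_smul_deriv (a := a) (b := b) hg hg
  have hsplit : ∫ t in a..b, ⟪g t - (b - t) • deriv g t, g t⟫_ℂ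
      = (∫ t in a..b, ⟪g t, g t⟫_ℂ) - ∫ t in a..b, ⟪(b - t) • deriv g t, g t⟫_ℂ := by
    simp_rw [inner_sub_left]
    exact intervalIntegral.integral_sub (hgg.intervalIntegrable a b) (hg'g.intervalIntegrable a b)
  have hsymm : ∫ t in a..b, ⟪(b - t) • deriv g t, g t⟫_ℂ
      = conj (∫ t in a..b, ⟪(b - t) • g t, deriv g t⟫_ℂ) := by
    rw [← intervalIntegral.intervalIntegral_conj]
    simp_rw [inner_real_smul_left, map_mul, Complex.conj_ofReal, inner_conj_symm]
  have hnorm : (∫ t in a..b, ⟪g t, g t⟫_ℂ).re = ∫ t in a..b, ‖g t‖ ^ 2 := by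
    rw [← RCLike.re_to_complex, ← intervalIntegral.intervalIntegral_re (hgg.intervalIntegrable a b)]
    simp_rw [inner_self_eq_norm_sq]
  rw [hsymm] at hsplit
  apply_fun Complex.re at hibp hsplit
  rw [Complex.sub_re, hnorm, Complex.conj_re] at hsplit
  rw [Complex.add_re, Complex.re_ofReal_mul,
    show (⟪g a, g a⟫_ℂ).re = ‖g a‖ ^ 2 from inner_self_eq_norm_sq (𝕜 := ℂ) _] at hibp
  linarith

end WeightedIntegrationByParts

theorem projection_energy_identity_general (k : ℕ)
    -- X : a complex Hilbert space
    (X : Type*) [NormedAddCommGroup X] [InnerProductSpace ℂ X]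
    (a b : ℝ)
    (v : ℝ → X) (hv : IsPolyDeg X k v)
    (p : ℝ → X) (hp : IsL2ProjOn X a b k v p) :
    -- paper's ⟨x, y⟩ (linear in the first argument) is Mathlib's `inner y x`
    (1 / 2) * (∫ t in a..b, ‖p t‖ ^ 2) + ((b - a) / 2) * ‖p a‖ ^ 2
      = (b - a) * ((inner ℂ (p a) (v a) : ℂ)).re
        + (∫ t in a..b, (inner ℂ ((b - t) • p t) (deriv v t) : ℂ)).re := by
  obtain ⟨hp_poly, horth⟩ := hp
  have hχ := hp_poly.sub_smul_deriv b
  have hχv : ∫ t in a..b, ⟪p t - (b - t) • deriv p t, v t⟫_ℂ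
      = ∫ t in a..b, ⟪p t - (b - t) • deriv p t, p t⟫_ℂ := by
    have h := congrArg conj (horth _ hχ)
    rw [← intervalIntegral.intervalIntegral_conj, map_zero] at h
    simp_rw [inner_conj_symm, inner_sub_right] at h
    rw [intervalIntegral.integral_sub ((hχ.continuous.inner hv.continuous).intervalIntegrable a b)
      ((hχ.continuous.inner hp_poly.continuous).intervalIntegrable a b)] at h
    exact sub_eq_zero.1 h
  rw [← re_integral_inner_sub_smul_deriv_self hp_poly.contDiff, ← hχv,
    integral_inner_sub_smul_deriv hv.contDiff hp_poly.contDiff, Complex.add_re,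
    Complex.re_ofReal_mul]

theorem projection_energy_identity (k : ℕ) (hk : 1 ≤ k)
    -- X : a complex Hilbert space
    (X : Type*) [NormedAddCommGroup X] [InnerProductSpace ℂ X] [CompleteSpace X]
    (a b : ℝ) (hab : a < b)
    (v : ℝ → X) (hv : IsPolyDeg X k v)
    (p : ℝ → X) (hp : IsL2ProjOn X a b k v p) :
    -- paper's ⟨x, y⟩ (linear in the first argument) is Mathlib's `inner y x`
    (1 / 2) * (∫ t in a..b, ‖p t‖ ^ 2) + ((b - a) / 2) * ‖p a‖ ^ 2
      = (b - a) * ((inner ℂ (p a) (v a) : ℂ)).re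
        + (∫ t in a..b, (inner ℂ ((b - t) • p t) (deriv v t) : ℂ)).re :=
  projection_energy_identity_general k X a b v hv p hp
end
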